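/- arXiv:1212.6061 — 4 statements merged into one kernel-verified Lean document; each statement's English description precedes it below -/
import Mathlib

section
/- Let H, D : (0,R) → ℝ be continuous with H(r) > 0, D(r) ≥ 0, H differentiable with H'(r) = ((Q-1)/r)·H(r) + 2·D(r) for all r ∈ (0,R), where Q > 1. Define N(r) = r·D(r)/H(r). If N(r) ≤ κ for all r ∈ (0,R), then for all 0 < r ≤ R/2 one has H(2r) ≤ 2^(Q-1+2κ) · H(r). -/
/-!
Since `N ≤ κ`, the identity for `H'` gives `H'(s) ≤ (Q - 1 + 2κ) / s · H(s)`, so `H(s) / s^(Q-1+2κ)`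
is nonincreasing; comparing its values at `r` and `2r` is the doubling estimate.
-/

open Set

section GrowthComparison

variable {f f' : ℝ → ℝ} {a b c : ℝ}

theorem antitoneOn_div_rpow_of_hasDerivAt_le (ha : 0 < a)
    (hf : ∀ s ∈ Icc a b, HasDerivAt f (f' s) s) (hf' : ∀ s ∈ Ioo a b, f' s ≤ c / s * f s) :
    AntitoneOn (fun s => f s / s ^ c) (Icc a b) := by
  have hderiv : ∀ s ∈ Icc a b, HasDerivAt (fun s => f s / s ^ c)
      ((f' s * s ^ c - f s * (c * s ^ (c - 1))) / (s ^ c) ^ 2) s := fun s hs =>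
    have hs0 : 0 < s := ha.trans_le hs.1
    (hf s hs).div (Real.hasDerivAt_rpow_const (Or.inl hs0.ne')) (Real.rpow_pos_of_pos hs0 c).ne'
  refine antitoneOn_of_hasDerivWithinAt_nonpos (convex_Icc a b)
    (fun s hs => (hderiv s hs).continuousAt.continuousWithinAt)
    (fun s hs => (hderiv s (interior_subset hs)).hasDerivWithinAt) fun s hs => ?_
  rw [interior_Icc] at hs
  have hs0 : 0 < s := ha.trans hs.1
  have hpow : 0 < s ^ c := Real.rpow_pos_of_pos hs0 c
  have hbound : f' s * s ^ c ≤ f s * (c * s ^ (c - 1)) := by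
    calc f' s * s ^ c ≤ c / s * f s * s ^ c := mul_le_mul_of_nonneg_right (hf' s hs) hpow.le
      _ = f s * (c * s ^ (c - 1)) := by rw [Real.rpow_sub_one hs0.ne']; ring
  exact div_nonpos_of_nonpos_of_nonneg (by linarith) (sq_nonneg _)

theorem le_rpow_mul_of_hasDerivAt_le (ha : 0 < a) (hab : a ≤ b)
    (hf : ∀ s ∈ Icc a b, HasDerivAt f (f' s) s) (hf' : ∀ s ∈ Ioo a b, f' s ≤ c / s * f s) :
    f b ≤ (b / a) ^ c * f a := by
  have hmono := antitoneOn_div_rpow_of_hasDerivAt_le ha hf hf'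
    (left_mem_Icc.2 hab) (right_mem_Icc.2 hab) hab
  have hb : 0 < b ^ c := Real.rpow_pos_of_pos (ha.trans_le hab) c
  have ha' : 0 < a ^ c := Real.rpow_pos_of_pos ha c
  rw [Real.div_rpow (ha.trans_le hab).le ha.le]
  calc f b = f b / b ^ c * b ^ c := (div_mul_cancel₀ _ hb.ne').symm
    _ ≤ f a / a ^ c * b ^ c := mul_le_mul_of_nonneg_right hmono hb.le
    _ = b ^ c / a ^ c * f a := by ring

end GrowthComparison

theorem growth_rate_le_of_frequency_le {Q κ s H D : ℝ} (hs : 0 < s) (hH : 0 < H)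
    (hN : s * D / H ≤ κ) : (Q - 1) / s * H + 2 * D ≤ (Q - 1 + 2 * κ) / s * H := by
  have hD : D ≤ κ / s * H := by
    rw [div_le_iff₀ hH] at hN
    rw [div_mul_eq_mul_div, le_div_iff₀ hs]
    linarith
  calc (Q - 1) / s * H + 2 * D ≤ (Q - 1) / s * H + 2 * (κ / s * H) := by linarith
    _ = (Q - 1 + 2 * κ) / s * H := by ring

theorem stmt_0_general (Q κ R : ℝ)
    (H D : ℝ → ℝ)
    (hHpos : ∀ r ∈ Ioo 0 R, 0 < H r)
    (hH' : ∀ r ∈ Ioo 0 R, HasDerivAt H ((Q - 1) / r * H r + 2 * D r) r)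
    (hN : ∀ r ∈ Ioo 0 R, r * D r / H r ≤ κ) :
    ∀ r ∈ Ioo 0 (R / 2), H (2 * r) ≤ 2 ^ (Q - 1 + 2 * κ) * H r := by
  rintro r ⟨hr0, hrR⟩
  have hsub : Icc r (2 * r) ⊆ Ioo 0 R := fun s hs => ⟨by linarith [hs.1], by linarith [hs.2]⟩
  have hdoubling := le_rpow_mul_of_hasDerivAt_le hr0 (by linarith) (fun s hs => hH' s (hsub hs))
    fun s hs => growth_rate_le_of_frequency_le (hr0.trans hs.1) (hHpos s (hsub (Ioo_subset_Icc_self hs)))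
      (hN s (hsub (Ioo_subset_Icc_self hs)))
  rwa [mul_div_cancel_right₀ 2 hr0.ne'] at hdoubling

/-- Doubling estimate for the height function from bounded frequency. -/
theorem stmt_0 (Q κ R : ℝ) (hQ : 1 < Q) (hR : 0 < R)
    (H D : ℝ → ℝ)
    (hHcont : ContinuousOn H (Ioo 0 R))
    (hDcont : ContinuousOn D (Ioo 0 R))
    (hHpos : ∀ r ∈ Ioo 0 R, 0 < H r)
    (hDnn : ∀ r ∈ Ioo 0 R, 0 ≤ D r)
    (hH' : ∀ r ∈ Ioo 0 R, HasDerivAt H ((Q - 1) / r * H r + 2 * D r) r)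
    (hN : ∀ r ∈ Ioo 0 R, r * D r / H r ≤ κ) :
    ∀ r ∈ Ioo 0 (R / 2), H (2 * r) ≤ 2 ^ (Q - 1 + 2 * κ) * H r :=
  stmt_0_general Q κ R H D hHpos hH' hN
end

section
/- In ℝ^N = ℝ^m × ℝ^k with coordinates (z,t), let α > 0 and define ρ_α(z,t) = (|z|^(2(α+1)) + 4(α+1)²|t|²)^(1/(2(α+1))). Then for (z,t) ≠ (0,0), |∇_z ρ_α|² + (|z|^(2α)/4)|∇_t ρ_α|² = |z|^(2α)/ρ_α(z,t)^(2α). -/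
/-!
Writing `S = |z|^{2(α+1)} + 4(α+1)²|t|²` and `ρ = S^e` with `e = 1/(2(α+1))`, the chain rule gives
`∇_z ρ = S^{e-1} |z|^{2α} z` and `∇_t ρ = 4(α+1) S^{e-1} t`. Hence
`|∇_α ρ|² = S^{2(e-1)} |z|^{2α} (|z|^{2α+2} + 4(α+1)²|t|²) = |z|^{2α} S^{2e-1}`,
and `2e - 1 = -2αe` turns `S^{2e-1}` into `ρ^{-2α}`.
-/

open Real

section Gradient

variable {E : Type*} [NormedAddCommGroup E] [InnerProductSpace ℝ E] [CompleteSpace E]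

theorem HasFDerivAt.hasGradientAt_smul_innerSL {f : E → ℝ} {x v : E} {c : ℝ}
    (h : HasFDerivAt f (c • innerSL ℝ v) x) : HasGradientAt f (c • v) x := by
  rw [hasGradientAt_iff_hasFDerivAt, map_smul]
  exact h

theorem hasGradientAt_rpow_norm_rpow_add_const (x : E) {p : ℝ} (hp : 1 < p) (C e : ℝ)
    (hS : 0 < ‖x‖ ^ p + C) :
    HasGradientAt (fun y : E => (‖y‖ ^ p + C) ^ e)
      ((e * (‖x‖ ^ p + C) ^ (e - 1) * (p * ‖x‖ ^ (p - 2))) • x) x := by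
  have h := ((hasFDerivAt_norm_rpow x hp).add_const C).rpow_const (p := e) (Or.inl hS.ne')
  rw [smul_smul] at h
  exact h.hasGradientAt_smul_innerSL

theorem hasGradientAt_rpow_const_add_mul_norm_sq (x : E) (A c e : ℝ)
    (hS : 0 < A + c * ‖x‖ ^ 2) :
    HasGradientAt (fun y : E => (A + c * ‖y‖ ^ 2) ^ e)
      ((e * (A + c * ‖x‖ ^ 2) ^ (e - 1) * c * 2) • x) x := by
  have h := (((hasStrictFDerivAt_norm_sq x).hasFDerivAt.const_mul c).const_add A).rpow_const
    (p := e) (Or.inl hS.ne')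
  rw [← ofNat_smul_eq_nsmul ℝ, smul_smul, smul_smul] at h
  exact h.hasGradientAt_smul_innerSL

end Gradient

theorem norm_rpow_add_mul_norm_sq_pos {E F : Type*} [NormedAddCommGroup E]
    [NormedAddCommGroup F] {z : E} {t : F} (hzt : (z, t) ≠ (0, 0)) (p : ℝ) {c : ℝ}
    (hc : 0 < c) : 0 < ‖z‖ ^ p + c * ‖t‖ ^ 2 := by
  by_cases hz : z = 0
  · have ht : t ≠ 0 := fun ht => hzt (by rw [hz, ht])
    have : 0 < c * ‖t‖ ^ 2 := by positivity
    linarith [rpow_nonneg (norm_nonneg z) p]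
  · have : 0 ≤ c * ‖t‖ ^ 2 := by positivity
    linarith [rpow_pos_of_pos (norm_pos_iff.mpr hz) p]

theorem baouendi_gauge_identity {α r s S e : ℝ} (hα : α + 1 ≠ 0) (hr : 0 ≤ r)
    (hS : S = r ^ (2 * (α + 1)) + 4 * (α + 1) ^ 2 * s ^ 2) (hS_pos : 0 < S)
    (he : e * (2 * (α + 1)) = 1) :
    (S ^ (e - 1) * r ^ (2 * α)) ^ 2 * r ^ 2
        + r ^ (2 * α) / 4 * ((4 * (α + 1) * S ^ (e - 1)) ^ 2 * s ^ 2)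
      = r ^ (2 * α) / (S ^ e) ^ (2 * α) := by
  have hr2 : r ^ (2 * (α + 1)) = r ^ (2 * α) * r ^ 2 := by
    rw [← rpow_natCast, ← rpow_add' hr (by push_cast; contrapose! hα; linarith)]
    push_cast; ring_nf
  calc _ = r ^ (2 * α) * (S ^ (e - 1)) ^ 2 * S := by rw [hS, hr2]; ring
    _ = r ^ (2 * α) * S ^ (-(e * (2 * α))) := by
      rw [← rpow_natCast, ← rpow_mul hS_pos.le, mul_assoc, ← rpow_add_one hS_pos.ne']
      congr 2
      push_cast
      linear_combination he
    _ = _ := by rw [rpow_neg hS_pos.le, rpow_mul hS_pos.le, div_eq_mul_inv]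

/-- The α-gradient of the Baouendi pseudo-gauge: `|∇_α ρ_α|² = |z|^{2α}/ρ_α^{2α}`. -/
theorem stmt_6 (m k : ℕ) (α : ℝ) (hα : 0 < α)
    (ρ : EuclideanSpace ℝ (Fin m) → EuclideanSpace ℝ (Fin k) → ℝ)
    (hρ : ρ = fun z t => (‖z‖ ^ (2 * (α + 1)) + 4 * (α + 1) ^ 2 * ‖t‖ ^ 2) ^ (1 / (2 * (α + 1)))) :
    ∀ (z : EuclideanSpace ℝ (Fin m)) (t : EuclideanSpace ℝ (Fin k)), (z, t) ≠ (0, 0) →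
      ‖gradient (fun z' => ρ z' t) z‖ ^ 2 +
        ‖z‖ ^ (2 * α) / 4 * ‖gradient (fun t' => ρ z t') t‖ ^ 2 =
      ‖z‖ ^ (2 * α) / ρ z t ^ (2 * α) := by
  subst hρ
  intro z t hzt
  dsimp only
  set e := 1 / (2 * (α + 1))
  set S := ‖z‖ ^ (2 * (α + 1)) + 4 * (α + 1) ^ 2 * ‖t‖ ^ 2 with hS
  have he : e * (2 * (α + 1)) = 1 := one_div_mul_cancel (by positivity)
  have hS_pos : 0 < S := norm_rpow_add_mul_norm_sq_pos hzt _ (by positivity)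
  have hz : HasGradientAt (fun z' => (‖z'‖ ^ (2 * (α + 1)) + 4 * (α + 1) ^ 2 * ‖t‖ ^ 2) ^ e)
      ((S ^ (e - 1) * ‖z‖ ^ (2 * α)) • z) z := by
    convert hasGradientAt_rpow_norm_rpow_add_const z (by linarith) _ e hS_pos using 2
    rw [show 2 * (α + 1) - 2 = 2 * α by ring]
    linear_combination (S ^ (e - 1) * ‖z‖ ^ (2 * α)) * he.symm
  have ht : HasGradientAt (fun t' => (‖z‖ ^ (2 * (α + 1)) + 4 * (α + 1) ^ 2 * ‖t'‖ ^ 2) ^ e)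
      ((4 * (α + 1) * S ^ (e - 1)) • t) t := by
    convert hasGradientAt_rpow_const_add_mul_norm_sq t _ _ e hS_pos using 2
    linear_combination (4 * (α + 1) * S ^ (e - 1)) * he.symm
  rw [hz.gradient, ht.gradient, norm_smul, norm_smul, Real.norm_eq_abs, Real.norm_eq_abs,
    mul_pow, mul_pow, sq_abs, sq_abs]
  exact baouendi_gauge_identity (by positivity) (norm_nonneg z) hS hS_pos he
end

section
/- In ℝ^N = ℝ^m × ℝ^k, let α > 0, ρ_α(z,t) = (|z|^(2(α+1)) + 4(α+1)²|t|²)^(1/(2(α+1))), Z_α = Σ z_i ∂_{z_i} + (α+1)Σ t_j ∂_{t_j}, and for u ∈ C¹ define ⟨∇_α u, ∇_α ρ_α⟩ = ⟨∇_z u, ∇_z ρ_α⟩ + (|z|^(2α)/4)⟨∇_t u, ∇_t ρ_α⟩. Then for (z,t) ≠ (0,0), ⟨∇_α u, ∇_α ρ_α⟩ = (Z_α u / ρ_α) · (|z|^(2α)/ρ_α^(2α)). -/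
/-!
Away from the origin the gauge is a smooth function of `‖z‖ ^ (2(α+1))` and `‖t‖ ^ 2`, and the
chain rule gives `∇_z ρ_α = ‖z‖^(2α) ρ_α^(-(2α+1)) z` and `∇_t ρ_α = 4(α+1) ρ_α^(-(2α+1)) t`.
The weight `‖z‖^(2α)/4` in front of the `t`-part turns `4(α+1)` into `(α+1) ‖z‖^(2α)`, so both
parts carry the common factor `‖z‖^(2α) ρ_α^(-(2α+1))`, and what remains is the pairing of `∇u`
with the dilation field `(z, (α+1) t)`, i.e. `Z_α u`.
-/

open Real RealInnerProductSpace

section GradientCalculus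

variable {F : Type*} [NormedAddCommGroup F] [InnerProductSpace ℝ F] [CompleteSpace F]
  {f : F → ℝ} {f' x : F}

theorem hasGradientAt_iff_hasFDerivAt_innerSL :
    HasGradientAt f f' x ↔ HasFDerivAt f (innerSL ℝ f') x :=
  Iff.rfl

theorem HasGradientAt.rpow_const {p : ℝ} (hf : HasGradientAt f f' x) (h : f x ≠ 0 ∨ 1 ≤ p) :
    HasGradientAt (fun y => f y ^ p) ((p * f x ^ (p - 1)) • f') x := by
  rw [hasGradientAt_iff_hasFDerivAt_innerSL, map_smul]
  exact HasFDerivAt.rpow_const hf h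

theorem HasGradientAt.add_const (hf : HasGradientAt f f' x) (c : ℝ) :
    HasGradientAt (fun y => f y + c) f' x :=
  (hasFDerivAt_add_const_iff c).mpr hf

theorem HasGradientAt.const_add (hf : HasGradientAt f f' x) (c : ℝ) :
    HasGradientAt (fun y => c + f y) f' x :=
  (hasFDerivAt_const_add_iff c).mpr hf

theorem HasGradientAt.const_mul (hf : HasGradientAt f f' x) (c : ℝ) :
    HasGradientAt (fun y => c * f y) (c • f') x := by
  rw [hasGradientAt_iff_hasFDerivAt_innerSL, map_smul]
  exact HasFDerivAt.const_mul hf c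

theorem hasGradientAt_norm_rpow {p : ℝ} (hp : 1 < p) (x : F) :
    HasGradientAt (fun y => ‖y‖ ^ p) ((p * ‖x‖ ^ (p - 2)) • x) x := by
  rw [hasGradientAt_iff_hasFDerivAt_innerSL, map_smul]
  exact hasFDerivAt_norm_rpow x hp

theorem hasGradientAt_norm_sq (x : F) : HasGradientAt (fun y => ‖y‖ ^ 2) ((2 : ℝ) • x) x := by
  rw [hasGradientAt_iff_hasFDerivAt_innerSL, map_smul]
  exact_mod_cast (hasStrictFDerivAt_norm_sq x).hasFDerivAt

end GradientCalculus

theorem Real.rpow_one_div_sub_one {a p : ℝ} (ha : 0 ≤ a) (hp : p ≠ 0) :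
    a ^ (1 / p - 1) = ((a ^ (1 / p)) ^ (p - 1))⁻¹ := by
  rw [← rpow_mul ha, ← rpow_neg ha]
  congr 1
  field_simp
  ring

noncomputable section BaouendiGauge

variable {F G : Type*} [NormedAddCommGroup F] [NormedAddCommGroup G] {α : ℝ} {z : F} {t : G}

def baouendiGaugeBase (α : ℝ) (z : F) (t : G) : ℝ :=
  ‖z‖ ^ (2 * (α + 1)) + 4 * (α + 1) ^ 2 * ‖t‖ ^ 2

def baouendiGauge (α : ℝ) (z : F) (t : G) : ℝ :=
  baouendiGaugeBase α z t ^ (1 / (2 * (α + 1)))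

theorem baouendiGaugeBase_pos (hα : -1 < α) (h : (z, t) ≠ (0, 0)) :
    0 < baouendiGaugeBase α z t := by
  unfold baouendiGaugeBase
  rcases eq_or_ne z 0 with rfl | hz
  · have ht : t ≠ 0 := fun ht => h (by rw [ht])
    have : 0 < ‖t‖ := norm_pos_iff.mpr ht
    have : 0 < α + 1 := by linarith
    rw [norm_zero, zero_rpow (by positivity), zero_add]
    positivity
  · have : 0 < ‖z‖ := norm_pos_iff.mpr hz
    positivity

theorem hasGradientAt_baouendiGauge_left [InnerProductSpace ℝ F] [CompleteSpace F]
    (hα : -1 / 2 < α) (h : 0 < baouendiGaugeBase α z t) :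
    HasGradientAt (fun z' => baouendiGauge α z' t)
      ((‖z‖ ^ (2 * α) / baouendiGauge α z t ^ (2 * α + 1)) • z) z := by
  have hp : 1 < 2 * (α + 1) := by linarith
  unfold baouendiGauge baouendiGaugeBase at *
  convert ((hasGradientAt_norm_rpow hp z).add_const (4 * (α + 1) ^ 2 * ‖t‖ ^ 2)).rpow_const
    (p := 1 / (2 * (α + 1))) (Or.inl h.ne') using 1
  rw [smul_smul, rpow_one_div_sub_one h.le (by linarith),
    show 2 * (α + 1) - 1 = 2 * α + 1 by ring, show 2 * (α + 1) - 2 = 2 * α by ring]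
  congr 1
  field_simp [show α + 1 ≠ 0 by linarith]

theorem hasGradientAt_baouendiGauge_right [InnerProductSpace ℝ G] [CompleteSpace G]
    (hα : α + 1 ≠ 0) (h : 0 < baouendiGaugeBase α z t) :
    HasGradientAt (fun t' => baouendiGauge α z t')
      ((4 * (α + 1) / baouendiGauge α z t ^ (2 * α + 1)) • t) t := by
  unfold baouendiGauge baouendiGaugeBase at *
  convert (((hasGradientAt_norm_sq t).const_mul (4 * (α + 1) ^ 2)).const_add
    (‖z‖ ^ (2 * (α + 1)))).rpow_const (p := 1 / (2 * (α + 1))) (Or.inl h.ne') using 1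
  rw [smul_smul, smul_smul, rpow_one_div_sub_one h.le (mul_ne_zero two_ne_zero hα),
    show 2 * (α + 1) - 1 = 2 * α + 1 by ring]
  congr 1
  field_simp

end BaouendiGauge

theorem stmt_7_general (m k : ℕ) (α : ℝ) (hα : 0 < α)
    (ρ : EuclideanSpace ℝ (Fin m) → EuclideanSpace ℝ (Fin k) → ℝ)
    (hρ : ρ = fun z t => (‖z‖ ^ (2 * (α + 1)) + 4 * (α + 1) ^ 2 * ‖t‖ ^ 2) ^ (1 / (2 * (α + 1))))
    (u : EuclideanSpace ℝ (Fin m) → EuclideanSpace ℝ (Fin k) → ℝ) :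
    ∀ (z : EuclideanSpace ℝ (Fin m)) (t : EuclideanSpace ℝ (Fin k)), (z, t) ≠ (0, 0) →
      ⟪gradient (fun z' => u z' t) z, gradient (fun z' => ρ z' t) z⟫ +
          ‖z‖ ^ (2 * α) / 4 *
            ⟪gradient (fun t' => u z t') t, gradient (fun t' => ρ z t') t⟫ =
        ((⟪z, gradient (fun z' => u z' t) z⟫ +
            (α + 1) * ⟪t, gradient (fun t' => u z t') t⟫) / ρ z t) *
          (‖z‖ ^ (2 * α) / ρ z t ^ (2 * α)) := by
  obtain rfl : ρ = baouendiGauge α := hρ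
  intro z t hzt
  have hbase := baouendiGaugeBase_pos (by linarith) hzt
  have hρ0 : baouendiGauge α z t ≠ 0 := (rpow_pos_of_pos hbase _).ne'
  rw [(hasGradientAt_baouendiGauge_left (by linarith) hbase).gradient,
    (hasGradientAt_baouendiGauge_right (by linarith) hbase).gradient,
    real_inner_smul_right, real_inner_smul_right, real_inner_comm z, real_inner_comm t,
    rpow_add_one hρ0]
  field_simp

/-- The α-gradient of any `C¹` function paired with that of the pseudo-gauge:
`⟨∇_α u, ∇_α ρ_α⟩ = (Z_α u / ρ_α) ψ_α`. -/
theorem stmt_7 (m k : ℕ) (α : ℝ) (hα : 0 < α)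
    (ρ : EuclideanSpace ℝ (Fin m) → EuclideanSpace ℝ (Fin k) → ℝ)
    (hρ : ρ = fun z t => (‖z‖ ^ (2 * (α + 1)) + 4 * (α + 1) ^ 2 * ‖t‖ ^ 2) ^ (1 / (2 * (α + 1))))
    (u : EuclideanSpace ℝ (Fin m) → EuclideanSpace ℝ (Fin k) → ℝ)
    (hu : ContDiff ℝ 1 (fun p : EuclideanSpace ℝ (Fin m) × EuclideanSpace ℝ (Fin k) => u p.1 p.2)) :
    ∀ (z : EuclideanSpace ℝ (Fin m)) (t : EuclideanSpace ℝ (Fin k)), (z, t) ≠ (0, 0) →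
      ⟪gradient (fun z' => u z' t) z, gradient (fun z' => ρ z' t) z⟫ +
          ‖z‖ ^ (2 * α) / 4 *
            ⟪gradient (fun t' => u z t') t, gradient (fun t' => ρ z t') t⟫ =
        ((⟪z, gradient (fun z' => u z' t) z⟫ +
            (α + 1) * ⟪t, gradient (fun t' => u z t') t⟫) / ρ z t) *
          (‖z‖ ^ (2 * α) / ρ z t ^ (2 * α)) :=
  stmt_7_general m k α hα ρ hρ u
end

section
/- Let F : (0,R) → ℝ be absolutely continuous with F(r) > 0 and continuous up to R, so that F(R⁻) is a finite value, and let f : (0,R) → (0,∞) satisfy F₀ := ∫₀^R f(t)/t dt < ∞. Set M := max{F(R⁻), 1}, and suppose that (log F)'(r) ≥ −f(r)/r for a.e. r in the open set Λ = {r ∈ (0,R) : F(r) > M}. Then F(r) ≤ exp(F₀)·M for all r ∈ (0,R). -/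
open Set MeasureTheory

private lemma dini_exp_aux (ε I Fc : ℝ) (hε : 0 < ε) (hI : 0 ≤ I)
    (hI' : (1+ε/2)*(1+ε)*I ≤ ε/2) (hFc : 0 < Fc) :
    Fc * Real.exp (-((1+ε)*I)) ≤ Fc - (1+ε/2)*Fc*I := by
  have h1 : (1+ε)*I + 1 ≤ Real.exp ((1+ε)*I) := Real.add_one_le_exp _
  have h2 : Real.exp (-((1+ε)*I)) = (Real.exp ((1+ε)*I))⁻¹ := Real.exp_neg _
  have h3 : 0 < Real.exp ((1+ε)*I) := Real.exp_pos _
  rw [h2, mul_inv_le_iff₀' h3]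
  have hy : (1+ε/2)*I ≤ ε/2 := by nlinarith
  have h4 : 0 ≤ Fc - (1+ε/2)*Fc*I := by nlinarith
  nlinarith [mul_nonneg (sub_nonneg.mpr h1) h4,
    mul_nonneg (mul_nonneg hFc.le hI) (sub_nonneg.mpr hI')]

/-- Abstract Dini-type boundedness lemma: a positive absolutely continuous function whose
logarithmic derivative satisfies `(log F)' ≥ −f(r)/r` a.e. on the set where `F` exceeds
`M = max{F(R),1}`, with `f` Dini integrable, is bounded by `exp(F₀)·M`. -/
theorem stmt_18 (R : ℝ) (hR : 0 < R) (F f F' : ℝ → ℝ)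
    (hFpos : ∀ r ∈ Ioc 0 R, 0 < F r)
    (hFcont : ContinuousOn F (Ioc 0 R))
    (hfpos : ∀ t ∈ Ioo 0 R, 0 < f t)
    (hint : IntegrableOn (fun t => f t / t) (Ioo 0 R))
    (F₀ : ℝ) (hF₀ : F₀ = ∫ t in Ioo 0 R, f t / t)
    (hFTC : ∀ a b : ℝ, 0 < a → a ≤ b → b ≤ R → F b - F a = ∫ t in a..b, F' t)
    (hF'int : IntegrableOn F' (Ioo 0 R))
    (M : ℝ) (hM : M = max (F R) 1)
    (hineq : ∀ᵐ r ∂volume, r ∈ Ioo 0 R → M < F r → -(f r / r) ≤ F' r / F r) :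
    ∀ r ∈ Ioo 0 R, F r ≤ Real.exp F₀ * M := by
  set g : ℝ → ℝ := fun t => f t / t with hg
  -- nonnegativity of g on Ioo 0 R
  have hgpos : ∀ t ∈ Ioo 0 R, 0 < g t := fun t ht => div_pos (hfpos t ht) ht.1
  -- integrability on subintervals
  have hsubInt : ∀ (h : ℝ → ℝ), IntegrableOn h (Ioo 0 R) →
      ∀ a b : ℝ, 0 < a → b ≤ R → IntegrableOn h (Ioc a b) := by
    intro h hh a b ha hb
    have hs : Ioo a b ⊆ Ioo 0 R := fun t ht => ⟨ha.trans ht.1, ht.2.trans_le hb⟩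
    exact (hh.mono_set hs).congr_set_ae Ioo_ae_eq_Ioc.symm
  have hM1 : (1:ℝ) ≤ M := hM ▸ le_max_right _ _
  have hF₀0 : 0 ≤ F₀ := by
    rw [hF₀]
    refine setIntegral_nonneg measurableSet_Ioo fun t ht => (hgpos t ht).le
  -- main estimate for each ε > 0
  intro r hr
  by_cases hrM : F r ≤ M
  · calc F r ≤ M := hrM
      _ = 1 * M := (one_mul M).symm
      _ ≤ Real.exp F₀ * M := by
        have := Real.one_le_exp hF₀0
        nlinarith
  push_neg at hrM
  -- the first point `b ≥ r` where `F` drops to `M`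
  have hIccsub : Icc r R ⊆ Ioc 0 R := fun t ht => ⟨lt_of_lt_of_le hr.1 ht.1, ht.2⟩
  have hFRM : F R ≤ M := hM ▸ le_max_left _ _
  set T : Set ℝ := {s ∈ Icc r R | F s ≤ M} with hT
  have hTne : T.Nonempty := ⟨R, ⟨⟨hr.2.le, le_rfl⟩, hFRM⟩⟩
  have hTclosed : IsClosed T := by
    have : T = Icc r R ∩ F ⁻¹' Iic M := rfl
    rw [this]
    exact (hFcont.mono hIccsub).preimage_isClosed_of_isClosed isClosed_Icc isClosed_Iic
  have hTcompact : IsCompact T :=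
    isCompact_Icc.of_isClosed_subset hTclosed (sep_subset _ _)
  set b : ℝ := sInf T with hbdef
  have hbT : b ∈ T := hTcompact.sInf_mem hTne
  have hrb : r < b := by
    rcases lt_or_eq_of_le hbT.1.1 with h | h
    · exact h
    · exact absurd (h ▸ hbT.2) (not_le.mpr hrM)
  have hbR : b ≤ R := hbT.1.2
  have hb0 : 0 < b := hr.1.trans hrb
  have hFbM : F b ≤ M := hbT.2
  have hIco : ∀ s ∈ Ico r b, M < F s := by
    intro s hs
    by_contra h
    push_neg at h
    have hsT : s ∈ T := ⟨⟨hs.1, hs.2.le.trans hbR⟩, h⟩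
    exact absurd (csInf_le hTcompact.bddBelow hsT) (not_le.mpr hs.2)
  -- pointwise a.e. inequality F' ≥ -g * F on {F > M}
  have hineq' : ∀ᵐ t ∂volume, t ∈ Ioo 0 R → M < F t → -(g t) * F t ≤ F' t := by
    filter_upwards [hineq] with t ht h1 h2
    have hFt : 0 < F t := hFpos t ⟨h1.1, h1.2.le⟩
    have := ht h1 h2
    calc -(g t) * F t ≤ (F' t / F t) * F t := by
          exact mul_le_mul_of_nonneg_right this hFt.le
      _ = F' t := by field_simp
  -- integrability of g and F' on subintervals of [r, R]
  have hgI : ∀ a c : ℝ, r ≤ a → a ≤ c → c ≤ R → IntervalIntegrable g volume a c := by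
    intro a c ha hac hc
    exact (intervalIntegrable_iff_integrableOn_Ioc_of_le hac).mpr
      (hsubInt g hint a c (hr.1.trans_le ha) hc)
  have hF'I : ∀ a c : ℝ, r ≤ a → a ≤ c → c ≤ R → IntervalIntegrable F' volume a c := by
    intro a c ha hac hc
    exact (intervalIntegrable_iff_integrableOn_Ioc_of_le hac).mpr
      (hsubInt F' hF'int a c (hr.1.trans_le ha) hc)
  -- the primitive P
  set P : ℝ → ℝ := fun s => ∫ t in r..s, g t with hP
  have hPcont : ContinuousOn P (Icc r b) := by
    have h1 : IntervalIntegrable g volume r b := hgI r b le_rfl hrb.le hbR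
    have := intervalIntegral.continuousOn_primitive_interval' h1 (left_mem_uIcc)
    rwa [uIcc_of_le hrb.le] at this
  have hPnonneg : ∀ a c : ℝ, r ≤ a → a ≤ c → c ≤ R → 0 ≤ ∫ t in a..c, g t := by
    intro a c ha hac hc
    rw [intervalIntegral.integral_of_le hac, integral_Ioc_eq_integral_Ioo]
    refine setIntegral_nonneg measurableSet_Ioo fun t ht => ?_
    exact le_of_lt (hgpos t ⟨(hr.1.trans_le ha).trans ht.1, ht.2.trans_le hc⟩)
  have hIccrb : Icc r b ⊆ Ioc 0 R := fun t ht => ⟨lt_of_lt_of_le hr.1 ht.1, ht.2.trans hbR⟩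
  have main : ∀ ε : ℝ, 0 < ε → F r ≤ Real.exp ((1+ε)*F₀) * M := by
    intro ε hε
    set φ : ℝ → ℝ := fun s => F s * Real.exp ((1+ε) * P s) with hφ
    have hφcont : ContinuousOn φ (Icc r b) :=
      (hFcont.mono hIccrb).mul
        (Real.continuous_exp.comp_continuousOn (continuousOn_const.mul hPcont))
    set S : Set ℝ := {s ∈ Icc r b | F r ≤ φ s} with hS
    have hrS : r ∈ S := by
      refine ⟨⟨le_rfl, hrb.le⟩, ?_⟩
      simp only [hφ, hP, intervalIntegral.integral_same, mul_zero, Real.exp_zero, mul_one, le_refl]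
    have hSclosed : IsClosed S := by
      have : S = Icc r b ∩ φ ⁻¹' Ici (F r) := rfl
      rw [this]
      exact hφcont.preimage_isClosed_of_isClosed isClosed_Icc isClosed_Ici
    have hScompact : IsCompact S :=
      isCompact_Icc.of_isClosed_subset hSclosed (sep_subset _ _)
    set c : ℝ := sSup S with hcdef
    have hcS : c ∈ S := hScompact.sSup_mem ⟨r, hrS⟩
    have hrc : r ≤ c := hcS.1.1
    have hcb : c ≤ b := hcS.1.2
    have hkeyc : c = b := by
      by_contra hne
      have hclt : c < b := lt_of_le_of_ne hcb hne
      have hcIoc : c ∈ Ioc 0 R := hIccrb hcS.1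
      have hFc : 0 < F c := hFpos c hcIoc
      set η₀ : ℝ := ε/(2*(1+ε/2)*(1+ε)) with hη₀def
      have hη₀ : 0 < η₀ := by positivity
      have hFcw : ContinuousWithinAt F (Icc r b) c := (hFcont.mono hIccrb) c hcS.1
      have hev1 : ∀ᶠ t in nhdsWithin c (Icc r b), F t < (1+ε/2)*F c :=
        hFcw.eventually_lt_const (by nlinarith)
      have hPw : ContinuousWithinAt P (Icc r b) c := hPcont c hcS.1
      have hev2 : ∀ᶠ t in nhdsWithin c (Icc r b), dist (P t) (P c) < η₀ :=
        hPw (Metric.ball_mem_nhds _ hη₀)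
      have hev := hev1.and hev2
      rw [eventually_nhdsWithin_iff, Metric.eventually_nhds_iff] at hev
      obtain ⟨δ, hδ, hprop⟩ := hev
      set s' : ℝ := min (c + δ/2) b with hs'def
      have hcs' : c < s' := lt_min (by linarith) hclt
      have hs'b : s' ≤ b := min_le_right _ _
      have hrs' : r ≤ s' := hrc.trans hcs'.le
      have hs'R : s' ≤ R := hs'b.trans hbR
      have hs'Icc : s' ∈ Icc r b := ⟨hrs', hs'b⟩
      have hball : ∀ t, c ≤ t → t ≤ s' → F t < (1+ε/2)*F c ∧ dist (P t) (P c) < η₀ := by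
        intro t h1 h2
        refine hprop ?_ ⟨hrc.trans h1, h2.trans hs'b⟩
        rw [Real.dist_eq, abs_of_nonneg (by linarith)]
        have : t ≤ c + δ/2 := h2.trans (min_le_left _ _)
        linarith
      set I : ℝ := ∫ t in c..s', g t with hIdef
      have hadd : P c + I = P s' :=
        intervalIntegral.integral_add_adjacent_intervals
          (hgI r c le_rfl hrc (hcb.trans hbR)) (hgI c s' hrc hcs'.le hs'R)
      have hIη : I < η₀ := by
        have h2 := (hball s' hcs'.le le_rfl).2
        rw [Real.dist_eq, abs_lt] at h2
        have : I = P s' - P c := by linarith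
        linarith [h2.2]
      have hI0 : 0 ≤ I := hPnonneg c s' hrc hcs'.le hs'R
      set C : ℝ := (1+ε/2)*F c with hCdef
      have hae : (fun t => -C * g t) ≤ᵐ[volume.restrict (Icc c s')] F' := by
        rw [← Measure.restrict_congr_set (Ioo_ae_eq_Icc (μ := volume) (a := c) (b := s'))]
        rw [Filter.EventuallyLE, ae_restrict_iff' measurableSet_Ioo]
        filter_upwards [hineq'] with t ht hmem
        have ht1 : t ∈ Ioo 0 R := ⟨lt_of_lt_of_le hr.1 (hrc.trans hmem.1.le), lt_of_lt_of_le hmem.2 hs'R⟩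
        have htM : M < F t := hIco t ⟨hrc.trans hmem.1.le, lt_of_lt_of_le hmem.2 hs'b⟩
        have hFt : F t < (1+ε/2)*F c := (hball t hmem.1.le hmem.2.le).1
        have hgt : 0 < g t := hgpos t ht1
        have h3 := ht ht1 htM
        have : -C * g t ≤ -(g t) * F t := by nlinarith
        linarith
      have hmono : (∫ t in c..s', -C * g t) ≤ ∫ t in c..s', F' t :=
        intervalIntegral.integral_mono_ae_restrict hcs'.le
          ((hgI c s' hrc hcs'.le hs'R).const_mul (-C)) (hF'I c s' hrc hcs'.le hs'R) hae
      have hconst : (∫ t in c..s', -C * g t) = -C * I := by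
        rw [hIdef]; exact intervalIntegral.integral_const_mul (-C) g
      have hFTCs : F s' - F c = ∫ t in c..s', F' t :=
        hFTC c s' (lt_of_lt_of_le hr.1 hrc) hcs'.le hs'R
      have hFs' : F c - C * I ≤ F s' := by
        rw [hconst] at hmono
        linarith [hFTCs ▸ hmono]
      have haux : (1+ε/2)*(1+ε)*I ≤ ε/2 := by
        have heq : (1+ε/2)*(1+ε)*η₀ = ε/2 := by
          rw [hη₀def]; field_simp
        nlinarith [mul_lt_mul_of_pos_left hIη (show (0:ℝ) < (1+ε/2)*(1+ε) by positivity)]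
      have hkey : F c * Real.exp (-((1+ε)*I)) ≤ F c - (1+ε/2)*(F c)*I :=
        dini_exp_aux ε I (F c) hε hI0 haux hFc
      have hφs' : F r ≤ φ s' := by
        have h2 : φ c = (F c * Real.exp (-((1+ε)*I))) * Real.exp ((1+ε)*(P s')) := by
          have harg : -((1+ε)*I) + (1+ε)*(P s') = (1+ε)*(P c) := by
            rw [← hadd]; ring
          simp only [hφ]
          rw [mul_assoc, ← Real.exp_add, harg]
        calc F r ≤ φ c := hcS.2
          _ = (F c * Real.exp (-((1+ε)*I))) * Real.exp ((1+ε)*(P s')) := h2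
          _ ≤ F s' * Real.exp ((1+ε)*(P s')) := by
              refine mul_le_mul_of_nonneg_right ?_ (Real.exp_nonneg _)
              calc F c * Real.exp (-((1+ε)*I)) ≤ F c - (1+ε/2)*(F c)*I := hkey
                _ = F c - C * I := by rw [hCdef]
                _ ≤ F s' := hFs'
          _ = φ s' := rfl
      have hs'S : s' ∈ S := ⟨hs'Icc, hφs'⟩
      exact absurd (le_csSup hScompact.bddAbove hs'S) (not_le.mpr hcs')
    -- now c = b, so F r ≤ φ b
    have hφb : F r ≤ φ b := hkeyc ▸ hcS.2
    have hPb : P b ≤ F₀ := by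
      have h1 : P b = ∫ t in Ioo r b, g t := by
        simp only [hP]
        rw [intervalIntegral.integral_of_le hrb.le, integral_Ioc_eq_integral_Ioo]
      rw [h1, hF₀]
      refine setIntegral_mono_set hint ?_ ?_
      · rw [Filter.EventuallyLE, ae_restrict_iff' measurableSet_Ioo]
        exact ae_of_all _ fun t ht => (hgpos t ht).le
      · refine HasSubset.Subset.eventuallyLE ?_
        exact fun t ht => ⟨hr.1.trans ht.1, ht.2.trans_le hbR⟩
    have hPb0 : 0 ≤ P b := hPnonneg r b le_rfl hrb.le hbR
    calc F r ≤ φ b := hφb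
      _ = F b * Real.exp ((1+ε)*(P b)) := rfl
      _ ≤ M * Real.exp ((1+ε)*F₀) := by
          refine mul_le_mul hFbM ?_ (Real.exp_nonneg _) (by linarith)
          exact Real.exp_le_exp.mpr (mul_le_mul_of_nonneg_left hPb (by linarith))
      _ = Real.exp ((1+ε)*F₀) * M := mul_comm _ _
  -- take ε → 0⁺
  have hlim : Filter.Tendsto (fun ε : ℝ => Real.exp ((1+ε)*F₀) * M)
      (nhdsWithin 0 (Ioi 0)) (nhds (Real.exp F₀ * M)) := by
    have hcont : Continuous fun ε : ℝ => Real.exp ((1+ε)*F₀) * M :=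
      (Real.continuous_exp.comp ((continuous_const.add continuous_id).mul continuous_const)).mul
        continuous_const
    have := (hcont.tendsto 0).mono_left (nhdsWithin_le_nhds (s := Ioi (0:ℝ)))
    simpa using this
  refine ge_of_tendsto hlim ?_
  filter_upwards [self_mem_nhdsWithin] with ε hε
  exact main ε hε
end
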